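/- arXiv:1402.1272 — 3 statements merged into one kernel-verified Lean document; each statement's English description precedes it below -/
import Mathlib

section
/- Let α, β ∈ (0,1) with α+β < 1. If f : [0,1)² → ℝ satisfies ∑_{j=1}^∞ v_s#(f;2^j) / 2^{j(1−(α+β))} < ∞ for s = 1,2, then f is continuous in {n^{1−(α+β)}}#-variation. -/
open MeasureTheory Filter Set ENNReal

noncomputable section

/-- The basic Rademacher-type function: 1 on [0,1/2), -1 on [1/2,1), 1-periodic. -/
def r0 (x : ℝ) : ℝ := if Int.fract x < 1/2 then 1 else -1

/-- The Walsh functions: products of Rademacher functions according to binary digits. -/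
def walsh (k : ℕ) (x : ℝ) : ℝ :=
  ∏ j ∈ Finset.range k, if k.testBit j then r0 (2 ^ j * x) else 1

/-- The Walsh–Dirichlet kernel `D_n`. -/
def walshDirichlet (n : ℕ) (x : ℝ) : ℝ :=
  ∑ k ∈ Finset.range n, walsh k x

/-- A finite ordered family of nonoverlapping subintervals of `[0,1)`. -/
structure IntervalPack (n : ℕ) where
  a : Fin n → ℝ
  b : Fin n → ℝ
  ha : ∀ i, 0 ≤ a i
  hab : ∀ i, a i < b i
  hb : ∀ i, b i ≤ 1
  disj : ∀ i j, i ≠ j → Disjoint (Ioo (a i) (b i)) (Ioo (a j) (b j))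

/-- A family of nonoverlapping intervals together with a point `y i` for each interval. -/
structure SharpPack (n : ℕ) extends IntervalPack n where
  y : Fin n → ℝ
  hy : ∀ i, y i ∈ Ico (0:ℝ) 1

/-- The `Λ^#`-variation sum of `f` over a pack, with weight sequence shifted by `m`
(weight `Λ (m+i)` for the `i`-th interval, `1`-based). -/
def sharpSum {n : ℕ} (Λ : ℕ → ℝ) (m : ℕ) (f : ℝ → ℝ → ℝ) (P : SharpPack n) : ℝ≥0∞ :=
  ∑ i : Fin n, ENNReal.ofReal
    (|f (P.b i) (P.y i) - f (P.a i) (P.y i)| / Λ (m + i.1 + 1))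

/-- `Λ_m^# V_1 (f)`. -/
def sharpV1 (Λ : ℕ → ℝ) (m : ℕ) (f : ℝ → ℝ → ℝ) : ℝ≥0∞ :=
  ⨆ (n : ℕ) (P : SharpPack n), sharpSum Λ m f P

/-- `Λ_m^# V_2 (f)`. -/
def sharpV2 (Λ : ℕ → ℝ) (m : ℕ) (f : ℝ → ℝ → ℝ) : ℝ≥0∞ :=
  sharpV1 Λ m (fun x y => f y x)

/-- `Λ_m^# V (f) = Λ_m^# V_1 (f) + Λ_m^# V_2 (f)`. -/
def sharpV (Λ : ℕ → ℝ) (m : ℕ) (f : ℝ → ℝ → ℝ) : ℝ≥0∞ :=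
  sharpV1 Λ m f + sharpV2 Λ m f

/-- `f ∈ Λ^# BV`: bounded `Λ^#`-variation. -/
def SharpBV (Λ : ℕ → ℝ) (f : ℝ → ℝ → ℝ) : Prop := sharpV Λ 0 f ≠ ⊤

/-- `f ∈ C Λ^# V`: continuity in `Λ^#`-variation, i.e. `Λ_m^# V (f) → 0`. -/
def CSharpV (Λ : ℕ → ℝ) (f : ℝ → ℝ → ℝ) : Prop :=
  Tendsto (fun m => sharpV Λ m f) atTop (nhds 0)

/-- `v_1^#(n, f)`: supremum of sums of `n` increments over `n` nonoverlapping
intervals, with freely chosen points `y_i`. -/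
def vSharp1 (f : ℝ → ℝ → ℝ) (n : ℕ) : ℝ≥0∞ :=
  ⨆ (P : SharpPack n), ∑ i : Fin n,
    ENNReal.ofReal |f (P.b i) (P.y i) - f (P.a i) (P.y i)|

def vSharp2 (f : ℝ → ℝ → ℝ) (n : ℕ) : ℝ≥0∞ := vSharp1 (fun x y => f y x) n

/-- `Λ V_1 (f)`: one fixed `y` for the whole family of intervals. -/
def lineV1 (Λ : ℕ → ℝ) (f : ℝ → ℝ → ℝ) : ℝ≥0∞ :=
  ⨆ (n : ℕ) (y : Ico (0:ℝ) 1) (P : IntervalPack n),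
    ∑ i : Fin n, ENNReal.ofReal (|f (P.b i) (y : ℝ) - f (P.a i) (y : ℝ)| / Λ (i.1 + 1))

def lineV2 (Λ : ℕ → ℝ) (f : ℝ → ℝ → ℝ) : ℝ≥0∞ := lineV1 Λ (fun x y => f y x)

/-- The mixed `(Λ¹,Λ²)`-variation `(Λ¹Λ²) V_{1,2}(f)`. -/
def mixedV (Λ₁ Λ₂ : ℕ → ℝ) (f : ℝ → ℝ → ℝ) : ℝ≥0∞ :=
  ⨆ (n : ℕ) (m : ℕ) (P : IntervalPack n) (Q : IntervalPack m),
    ∑ i : Fin n, ∑ j : Fin m, ENNReal.ofReal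
      (|f (P.a i) (Q.a j) - f (P.a i) (Q.b j) - f (P.b i) (Q.a j) + f (P.b i) (Q.b j)| /
        (Λ₁ (i.1 + 1) * Λ₂ (j.1 + 1)))

/-- Harmonic bounded variation `HBV` in the sense of Hardy–Krause/Waterman type. -/
def HBV (f : ℝ → ℝ → ℝ) : Prop :=
  lineV1 (fun n => (n : ℝ)) f + lineV2 (fun n => (n : ℝ)) f +
    mixedV (fun n => (n : ℝ)) (fun n => (n : ℝ)) f ≠ ⊤

/-- A finite family of nonoverlapping rectangles in `[0,1)²`. -/
structure RectPack (n : ℕ) where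
  a : Fin n → ℝ
  b : Fin n → ℝ
  c : Fin n → ℝ
  d : Fin n → ℝ
  ha : ∀ i, 0 ≤ a i
  hab : ∀ i, a i < b i
  hb : ∀ i, b i ≤ 1
  hc : ∀ i, 0 ≤ c i
  hcd : ∀ i, c i < d i
  hd : ∀ i, d i ≤ 1
  disj : ∀ i j, i ≠ j →
    Disjoint (Ioo (a i) (b i) ×ˢ Ioo (c i) (d i)) (Ioo (a j) (b j) ×ˢ Ioo (c j) (d j))

/-- The Dyachenko–Waterman rectangular variation `Λ* V (f)`. -/
def rectV (Λ : ℕ → ℝ) (f : ℝ → ℝ → ℝ) : ℝ≥0∞ :=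
  ⨆ (n : ℕ) (R : RectPack n), ∑ i : Fin n, ENNReal.ofReal
    (|f (R.a i) (R.c i) - f (R.a i) (R.d i) - f (R.b i) (R.c i) + f (R.b i) (R.d i)| /
      Λ (i.1 + 1))

/-- `q_N = 4^0 + 4^1 + ⋯ + 4^{N-1}`. -/
def qIdx (N : ℕ) : ℕ := ∑ k ∈ Finset.range N, 4 ^ k

/-- The tent function `φ_{N,j}` of height 1 on `[j 2^{-2N}, (j+1) 2^{-2N}]`. -/
def tent (N j : ℕ) (x : ℝ) : ℝ :=
  max 0 (1 - |2 ^ (2 * N + 1) * x - (2 * j + 1)|)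

/-- `φ_N = ∑_{j=1}^{2^{2N}-1} φ_{N,j}`. -/
def tentSum (N : ℕ) (x : ℝ) : ℝ :=
  ∑ j ∈ Finset.Icc 1 (2 ^ (2 * N) - 1), tent N j x

/-- `A_n^α = (α+1)(α+2)⋯(α+n)/n!`. -/
def Acoef (α : ℝ) (n : ℕ) : ℝ :=
  (∏ k ∈ Finset.range n, (α + k + 1)) / n.factorial

/-- The Cesàro `(C,α)` kernel for the Walsh system. -/
def cesaroKernel (α : ℝ) (n : ℕ) (x : ℝ) : ℝ :=
  (Acoef α (n - 1))⁻¹ * ∑ k ∈ Finset.Icc 1 n, Acoef (α - 1) (n - k) * walshDirichlet k x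

/-- The `(n,m)`-th Walsh–Fourier coefficient of `f`. -/
def fourierCoef (f : ℝ → ℝ → ℝ) (n m : ℕ) : ℝ :=
  ∫ x in (0:ℝ)..1, ∫ y in (0:ℝ)..1, f x y * walsh n x * walsh m y

/-- The rectangular partial sums of the double Walsh–Fourier series of `f`. -/
def partialSum (f : ℝ → ℝ → ℝ) (M N : ℕ) (x y : ℝ) : ℝ :=
  ∑ m ∈ Finset.range M, ∑ n ∈ Finset.range N, fourierCoef f m n * walsh m x * walsh n y

/-- The Cesàro `(C;α,β)` means of the double Walsh–Fourier series of `f`. -/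
def cesaroMean (α β : ℝ) (n m : ℕ) (f : ℝ → ℝ → ℝ) (x y : ℝ) : ℝ :=
  (Acoef α (n - 1) * Acoef β (m - 1))⁻¹ *
    ∑ i ∈ Finset.Icc 1 n, ∑ j ∈ Finset.Icc 1 m,
      Acoef (α - 1) (n - i) * Acoef (β - 1) (m - j) * partialSum f i j x y

/-- The sup norm of `f` over `[0,1]²` (in `ℝ≥0∞`). -/
def supNorm (f : ℝ → ℝ → ℝ) : ℝ≥0∞ :=
  ⨆ (x : Icc (0:ℝ) 1) (y : Icc (0:ℝ) 1), ENNReal.ofReal |f x y|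

/-- The norm `‖f‖_C + Λ^# V (f)` on `C ∩ Λ^# BV` (in `ℝ≥0∞`). -/
def bvNorm (Λ : ℕ → ℝ) (f : ℝ → ℝ → ℝ) : ℝ≥0∞ :=
  supNorm f + sharpV Λ 0 f

end

/-! Put the `i`-th interval (counted from 0) of a family into the dyadic block
`j = ⌊log₂ (i + 1)⌋`. Block `j` has at most `2^(j+1)` intervals, so their increments add up to at
most `v₁^#(f; 2^(j+1))` (this is monotone in `n`, because splitting an interval can only increase
the sum), and each of them carries a weight at least `Λ (m + 2^j)`. Hence
`Λ_m^# V₁(f) ≤ ∑_j v₁^#(f; 2^(j+1)) / Λ (m + 2^j)`. For `Λ n = n^δ` with `δ = 1 - (α + β) > 0`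
the `m = 0` series is finite by hypothesis and dominates the others, while each term tends to `0`
as `m → ∞`; dominated convergence finishes the proof, and `V₂` is `V₁` of the transposed function.
-/

theorem sum_le_vSharp1 (f : ℝ → ℝ → ℝ) {ι : Type*} [Fintype ι] (a b y : ι → ℝ)
    (ha : ∀ i, 0 ≤ a i) (hab : ∀ i, a i < b i) (hb : ∀ i, b i ≤ 1) (hy : ∀ i, y i ∈ Ico (0 : ℝ) 1)
    (hdisj : Pairwise fun i j => Disjoint (Ioo (a i) (b i)) (Ioo (a j) (b j))) :
    ∑ i, ENNReal.ofReal |f (b i) (y i) - f (a i) (y i)| ≤ vSharp1 f (Fintype.card ι) := by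
  let e := (Fintype.equivFin ι).symm
  let P : SharpPack (Fintype.card ι) :=
    { a := a ∘ e, b := b ∘ e, y := y ∘ e
      ha := fun _ => ha _, hab := fun _ => hab _, hb := fun _ => hb _, hy := fun _ => hy _
      disj := fun _ _ hij => hdisj (e.injective.ne hij) }
  refine le_of_eq_of_le ?_ (le_iSup _ P)
  exact (e.sum_comp fun i => ENNReal.ofReal |f (b i) (y i) - f (a i) (y i)|).symm

theorem SharpPack.sum_le_vSharp1 (f : ℝ → ℝ → ℝ) {n : ℕ} (P : SharpPack n)
    (s : Finset (Fin n)) :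
    ∑ i ∈ s, ENNReal.ofReal |f (P.b i) (P.y i) - f (P.a i) (P.y i)| ≤ vSharp1 f s.card := by
  rw [← Finset.sum_coe_sort, ← Fintype.card_coe]
  exact _root_.sum_le_vSharp1 f (fun i : s => P.a i) (fun i => P.b i) (fun i => P.y i)
    (fun _ => P.ha _) (fun _ => P.hab _) (fun _ => P.hb _) (fun _ => P.hy _)
    fun i j hij => P.disj _ _ (Subtype.val_injective.ne hij)

theorem ENNReal.tendsto_tsum_of_dominated {F : ℕ → ℕ → ℝ≥0∞} {g bound : ℕ → ℝ≥0∞}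
    (h_bound : ∀ m j, F m j ≤ bound j) (h_fin : ∑' j, bound j ≠ ∞)
    (h_lim : ∀ j, Tendsto (F · j) atTop (nhds (g j))) :
    Tendsto (fun m => ∑' j, F m j) atTop (nhds (∑' j, g j)) := by
  simp only [← lintegral_count] at h_fin ⊢
  exact tendsto_lintegral_of_dominated_convergence bound (fun _ => measurable_of_countable _)
    (fun m => ae_of_all _ (h_bound m)) h_fin (ae_of_all _ h_lim)

theorem vSharp1_le_succ (f : ℝ → ℝ → ℝ) (n : ℕ) : vSharp1 f n ≤ vSharp1 f (n + 1) := by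
  refine iSup_le fun P => ?_
  rcases isEmpty_or_nonempty (Fin n) with hn | hn
  · simp
  obtain ⟨i₀⟩ := hn
  -- split the interval `i₀` at `c`; the right half is indexed by `none`
  obtain ⟨c, hac, hcb⟩ := exists_between (P.hab i₀)
  set b₀ := Function.update P.b i₀ c
  have hb₀_le : ∀ i, b₀ i ≤ P.b i := fun i => by
    rcases eq_or_ne i i₀ with rfl | hi <;> simp [b₀, hcb.le, *]
  have hab₀ : ∀ i, P.a i < b₀ i := fun i => by
    rcases eq_or_ne i i₀ with rfl | hi <;> simp [b₀, P.hab, *]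
  let idx : Option (Fin n) → Fin n := fun o => o.getD i₀
  let a' : Option (Fin n) → ℝ := fun o => o.elim c P.a
  let b' : Option (Fin n) → ℝ := fun o => o.elim (P.b i₀) b₀
  have hsub : ∀ o, Ioo (a' o) (b' o) ⊆ Ioo (P.a (idx o)) (P.b (idx o)) := by
    rintro (_ | i)
    · exact Ioo_subset_Ioo_left hac.le
    · exact Ioo_subset_Ioo_right (hb₀_le i)
  have key := sum_le_vSharp1 f a' b' (fun o => P.y (idx o))
    (by rintro (_ | i) <;> simp [a', (P.ha i₀).trans hac.le, P.ha])
    (by rintro (_ | i) <;> simp [a', b', hcb, hab₀])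
    (by rintro (_ | i) <;> simp [b', P.hb, (hb₀_le _).trans (P.hb _)])
    (fun _ => P.hy _)
    (by
      intro o o' hoo'
      by_cases h : idx o = idx o'
      · rcases o with _ | i <;> rcases o' with _ | j <;>
          simp_all [idx, a', b', b₀, Ioo_disjoint_Ioo, hac.le, hcb.le]
      · exact (P.disj _ _ h).mono (hsub o) (hsub o'))
  rw [Fintype.card_option, Fintype.card_fin, Fintype.sum_option] at key
  refine le_trans ?_ key
  calc ∑ i, ENNReal.ofReal |f (P.b i) (P.y i) - f (P.a i) (P.y i)|
      ≤ ∑ i, (ENNReal.ofReal |f (b₀ i) (P.y i) - f (P.a i) (P.y i)| +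
          if i = i₀ then ENNReal.ofReal |f (P.b i₀) (P.y i₀) - f c (P.y i₀)| else 0) := by
        refine Finset.sum_le_sum fun i _ => ?_
        rcases eq_or_ne i i₀ with rfl | hi
        · simp only [b₀, Function.update_self, ← Real.dist_eq, ← edist_dist]
          exact (edist_triangle _ _ _).trans_eq (add_comm _ _)
        · simp [b₀, hi]
    _ = _ := by simp [Finset.sum_add_distrib, add_comm, a', b', idx]

theorem vSharp1_mono (f : ℝ → ℝ → ℝ) : Monotone (vSharp1 f) :=
  monotone_nat_of_le_succ (vSharp1_le_succ f)

open Finset in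
theorem card_filter_log_eq_le (n j : ℕ) :
    #{i : Fin n | Nat.log 2 (i + 1) = j} ≤ 2 ^ (j + 1) := by
  calc #{i : Fin n | Nat.log 2 (i + 1) = j}
      ≤ #(Finset.range (2 ^ (j + 1))) := by
        refine Finset.card_le_card_of_injOn (fun i => i.1) (fun i hi => ?_) Fin.val_injective.injOn
        have := Nat.lt_pow_succ_log_self (b := 2) (by norm_num) (i + 1)
        simp only [Finset.coe_filter, Finset.mem_univ, true_and, Set.mem_ofPred_eq] at hi
        subst hi
        simp only [Finset.coe_range, Set.mem_Iio]
        omega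
    _ = 2 ^ (j + 1) := Finset.card_range _

theorem sharpSum_le_tsum {Λ : ℕ → ℝ} (hΛ : Monotone Λ) (hΛ₁ : 0 < Λ 1) (f : ℝ → ℝ → ℝ)
    (m : ℕ) {n : ℕ} (P : SharpPack n) :
    sharpSum Λ m f P ≤ ∑' j, vSharp1 f (2 ^ (j + 1)) / ENNReal.ofReal (Λ (m + 2 ^ j)) := by
  set F : Fin n → ℝ≥0∞ := fun i => ENNReal.ofReal |f (P.b i) (P.y i) - f (P.a i) (P.y i)|
  set w : ℕ → ℝ≥0∞ := fun j => ENNReal.ofReal (Λ (m + 2 ^ j))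
  set g : Fin n → ℕ := fun i => Nat.log 2 (i + 1)
  have hpos : ∀ k, 0 < k → 0 < Λ k := fun k hk => hΛ₁.trans_le (hΛ hk)
  have hg : ∀ i : Fin n, 2 ^ g i ≤ (i : ℕ) + 1 ∧ g i < n := fun i =>
    ⟨Nat.pow_log_le_self 2 (x := i + 1) (by omega),
      (Nat.log_lt_self 2 (x := i + 1) (by omega)).trans_le i.2⟩
  calc sharpSum Λ m f P
      ≤ ∑ i, F i / w (g i) := by
        refine Finset.sum_le_sum fun i _ => ?_
        have hblock : m + 2 ^ g i ≤ m + i + 1 := by linarith [(hg i).1]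
        have hw : 0 < Λ (m + 2 ^ g i) := hpos _ (by positivity)
        rw [ENNReal.ofReal_div_of_pos (hw.trans_le (hΛ hblock))]
        exact ENNReal.div_le_div_left (ENNReal.ofReal_le_ofReal (hΛ hblock)) _
    _ = ∑ j ∈ Finset.range n, ∑ i with g i = j, F i / w (g i) :=
        (Finset.sum_fiberwise_of_maps_to (fun i _ => Finset.mem_range.2 (hg i).2) _).symm
    _ = ∑ j ∈ Finset.range n, (∑ i with g i = j, F i) / w j := by
        refine Finset.sum_congr rfl fun j _ => ?_
        simp only [div_eq_mul_inv, Finset.sum_mul]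
        exact Finset.sum_congr rfl fun i hi => by rw [(Finset.mem_filter.1 hi).2]
    _ ≤ ∑ j ∈ Finset.range n, vSharp1 f (2 ^ (j + 1)) / w j := by
        gcongr with j
        exact (P.sum_le_vSharp1 f _).trans (vSharp1_mono f (card_filter_log_eq_le n j))
    _ ≤ _ := ENNReal.sum_le_tsum _

theorem tendsto_sharpV1_of_tsum_ne_top {Λ : ℕ → ℝ} (hΛ : Monotone Λ) (hΛ₁ : 0 < Λ 1)
    (hΛ_top : Tendsto Λ atTop atTop) (f : ℝ → ℝ → ℝ)
    (hf : ∑' j, vSharp1 f (2 ^ (j + 1)) / ENNReal.ofReal (Λ (2 ^ j)) ≠ ∞) :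
    Tendsto (fun m => sharpV1 Λ m f) atTop (nhds 0) := by
  have hv : ∀ j, vSharp1 f (2 ^ (j + 1)) ≠ ∞ := fun j htop =>
    hf (ENNReal.tsum_eq_top_of_eq_top ⟨j, by simp [htop, ENNReal.top_div]⟩)
  have hlim : Tendsto (fun m => ∑' j, vSharp1 f (2 ^ (j + 1)) / ENNReal.ofReal (Λ (m + 2 ^ j)))
      atTop (nhds (∑' _ : ℕ, 0)) := by
    refine ENNReal.tendsto_tsum_of_dominated (fun m j => ?_) hf fun j => ?_
    · exact ENNReal.div_le_div_left (ENNReal.ofReal_le_ofReal (hΛ (Nat.le_add_left _ m))) _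
    · have : Tendsto (fun m => ENNReal.ofReal (Λ (m + 2 ^ j))) atTop (nhds ∞) :=
        ENNReal.tendsto_ofReal_atTop.comp (hΛ_top.comp (tendsto_add_atTop_nat _))
      simpa [div_eq_mul_inv] using ENNReal.Tendsto.const_mul this.inv (Or.inr (hv j))
  rw [tsum_zero] at hlim
  exact tendsto_of_tendsto_of_tendsto_of_le_of_le tendsto_const_nhds hlim (fun _ => zero_le)
    fun m => iSup₂_le fun _ P => sharpSum_le_tsum hΛ hΛ₁ f m P

theorem two_pow_rpow_inv_eq (δ : ℝ) (j : ℕ) :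
    ((((2 ^ j : ℕ) : ℝ)) ^ δ)⁻¹ = 2 ^ δ * (1 / 2 ^ (((j : ℝ) + 1) * δ)) := by
  rw [add_mul, one_mul, Real.rpow_add two_pos, Nat.cast_pow, Nat.cast_ofNat,
    ← Real.rpow_natCast, ← Real.rpow_mul zero_le_two]
  field_simp

theorem tendsto_sharpV1_rpow {δ : ℝ} (hδ : 0 < δ) (f : ℝ → ℝ → ℝ)
    (hf : ∑' j : ℕ, vSharp1 f (2 ^ (j + 1)) *
      ENNReal.ofReal (1 / (2 : ℝ) ^ (((j : ℝ) + 1) * δ)) ≠ ∞) :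
    Tendsto (fun m => sharpV1 (fun n => (n : ℝ) ^ δ) m f) atTop (nhds 0) := by
  refine tendsto_sharpV1_of_tsum_ne_top
    (fun _ _ h => Real.rpow_le_rpow (Nat.cast_nonneg _) (Nat.cast_le.2 h) hδ.le) (by simp)
    ((tendsto_rpow_atTop hδ).comp tendsto_natCast_atTop_atTop) f ?_
  have hw : ∀ j : ℕ, (ENNReal.ofReal (((2 ^ j : ℕ) : ℝ) ^ δ))⁻¹ =
      ENNReal.ofReal (2 ^ δ) * ENNReal.ofReal (1 / 2 ^ (((j : ℝ) + 1) * δ)) := fun j => by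
    rw [← ENNReal.ofReal_inv_of_pos (by positivity), ← ENNReal.ofReal_mul (by positivity),
      two_pow_rpow_inv_eq]
  simp_rw [div_eq_mul_inv, hw, mul_left_comm _ (ENNReal.ofReal _), ENNReal.tsum_mul_left]
  exact ENNReal.mul_ne_top ENNReal.ofReal_ne_top hf

theorem stmt9_general (α β : ℝ)
    (hαβ : α + β < 1) (f : ℝ → ℝ → ℝ)
    (h1 : (∑' j : ℕ, vSharp1 f (2 ^ (j + 1)) *
      ENNReal.ofReal (1 / (2 : ℝ) ^ (((j : ℝ) + 1) * (1 - (α + β))))) ≠ ⊤)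
    (h2 : (∑' j : ℕ, vSharp2 f (2 ^ (j + 1)) *
      ENNReal.ofReal (1 / (2 : ℝ) ^ (((j : ℝ) + 1) * (1 - (α + β))))) ≠ ⊤) :
    CSharpV (fun n => (n : ℝ) ^ (1 - (α + β))) f := by
  have hδ : 0 < 1 - (α + β) := by linarith
  have h := (tendsto_sharpV1_rpow hδ f h1).add (tendsto_sharpV1_rpow hδ (fun x y => f y x) h2)
  rw [add_zero] at h
  exact h

/-- if `∑_j v_s^#(f;2^j) / 2^{j(1-(α+β))} < ∞` for `s = 1,2`, then
`f ∈ C{n^{1-(α+β)}}^# V`. -/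
theorem stmt9 (α β : ℝ) (hα : α ∈ Ioo (0 : ℝ) 1) (hβ : β ∈ Ioo (0 : ℝ) 1)
    (hαβ : α + β < 1) (f : ℝ → ℝ → ℝ)
    (h1 : (∑' j : ℕ, vSharp1 f (2 ^ (j + 1)) *
      ENNReal.ofReal (1 / (2 : ℝ) ^ (((j : ℝ) + 1) * (1 - (α + β))))) ≠ ⊤)
    (h2 : (∑' j : ℕ, vSharp2 f (2 ^ (j + 1)) *
      ENNReal.ofReal (1 / (2 : ℝ) ^ (((j : ℝ) + 1) * (1 - (α + β))))) ≠ ⊤) :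
    CSharpV (fun n => (n : ℝ) ^ (1 - (α + β))) f :=
  stmt9_general α β hαβ f h1 h2
end

section
/- Let N ∈ ℕ and q_N = ∑_{k=0}^{N−1} 4^k. Define φ_{N,j} as the triangular tent function supported on [j·2^{−2N}, (j+1)·2^{−2N}] with peak value 1 at the midpoint, and φ_N = ∑_{j=1}^{2^{2N}−1} φ_{N,j}. Then ∫_0^1 φ_N(x) |D_{q_N}(x)| dx ≥ c·N for some absolute constant c > 0. -/
open MeasureTheory Filter Set ENNReal

/-!
Because `q_{N+1} = 4 q_N + 1`, the kernel satisfies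
`D_{q_{N+1}}(x) = D_4(x) D_{q_N}(4x) + w_{q_N}(4x)`, where `D_4 = 4` on `[0, 1/4)` and `D_4 = 0` on
`[1/4, 1)`. Iterating, `|D_{q_N}| ≥ (2·4^m + 1)/3` on `[4^{-m-1}, 4^{-m})` for every `m < N`.
Writing `N = m + k + 1`, this interval is the union of the `3·4^k` dyadic cells of length `4^{-N}`
with index `j ∈ [4^k, 4^{k+1})`; on the middle half of each cell `φ_{N,j} ≥ 1/2`, so each of
the `N` intervals contributes at least `3·4^k · 2^{-2N-1} · 4^m/3 = 1/8` to the integral.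
-/

lemma r0_of_lt_half {x : ℝ} (h0 : 0 ≤ x) (h : x < 1 / 2) : r0 x = 1 := by
  rw [r0, Int.fract_eq_self.mpr ⟨h0, by linarith⟩, if_pos h]

lemma r0_of_half_le {x : ℝ} (h0 : 1 / 2 ≤ x) (h : x < 1) : r0 x = -1 := by
  rw [r0, Int.fract_eq_self.mpr ⟨by linarith, h⟩, if_neg (not_lt.mpr h0)]

lemma abs_r0 (x : ℝ) : |r0 x| = 1 := by
  unfold r0; split <;> simp

lemma measurable_r0 : Measurable r0 :=
  Measurable.ite (measurableSet_lt measurable_id.fract measurable_const)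
    measurable_const measurable_const

lemma abs_walsh (k : ℕ) (x : ℝ) : |walsh k x| = 1 := by
  rw [walsh, Finset.abs_prod]
  exact Finset.prod_eq_one fun j _ => by split <;> simp [abs_r0]

lemma walsh_eq_prod_range {k n : ℕ} (hk : k < 2 ^ n) (x : ℝ) :
    walsh k x = ∏ j ∈ Finset.range n, if k.testBit j then r0 (2 ^ j * x) else 1 := by
  have hvanish : ∀ m, k < 2 ^ m → ∀ j ∈ Finset.range (max k n), j ∉ Finset.range m →
      (if k.testBit j then r0 (2 ^ j * x) else (1 : ℝ)) = 1 := fun m hm j _ hj => by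
    rw [Nat.testBit_lt_two_pow (hm.trans_le (Nat.pow_le_pow_right two_pos
      (by simpa using hj))), if_neg Bool.false_ne_true]
  rw [walsh, Finset.prod_subset (Finset.range_mono (le_max_left k n))
      (hvanish k Nat.lt_two_pow_self),
    Finset.prod_subset (Finset.range_mono (le_max_right k n)) (hvanish n hk)]

lemma walsh_two_mul_add (q b : ℕ) (hb : b < 2) (x : ℝ) :
    walsh (2 * q + b) x = (if b = 1 then r0 x else 1) * walsh q (2 * x) := by
  obtain ⟨n, hn⟩ : ∃ n, q < 2 ^ n := ⟨q, Nat.lt_two_pow_self⟩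
  rw [walsh_eq_prod_range (k := 2 * q + b) (n := n + 1) (by rw [pow_succ]; omega),
    walsh_eq_prod_range hn, Finset.prod_range_succ', mul_comm]
  congr 1
  · simp only [Nat.testBit_zero, pow_zero, one_mul, decide_eq_true_eq,
      Nat.mul_add_mod_self_left, Nat.mod_eq_of_lt hb]
  · refine Finset.prod_congr rfl fun j _ => ?_
    rw [Nat.testBit_succ, show (2 * q + b) / 2 = q by omega, pow_succ, mul_assoc]

lemma measurable_walshDirichlet (n : ℕ) : Measurable (walshDirichlet n) := by
  refine Finset.measurable_sum _ fun k _ => Finset.measurable_prod _ fun j _ => ?_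
  split_ifs
  exacts [measurable_r0.comp (measurable_const_mul _), measurable_const]

lemma abs_walshDirichlet_le (n : ℕ) (x : ℝ) : |walshDirichlet n x| ≤ n := by
  calc |walshDirichlet n x| ≤ ∑ k ∈ Finset.range n, |walsh k x| := Finset.abs_sum_le_sum_abs _ _
    _ = n := by simp [abs_walsh]

lemma walshDirichlet_two_mul (q : ℕ) (x : ℝ) :
    walshDirichlet (2 * q) x = (1 + r0 x) * walshDirichlet q (2 * x) := by
  induction q with
  | zero => simp [walshDirichlet]
  | succ q ih =>
    have h0 := walsh_two_mul_add q 0 (by norm_num) x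
    have h1 := walsh_two_mul_add q 1 (by norm_num) x
    simp only [add_zero, zero_ne_one, ↓reduceIte, one_mul] at h0 h1
    rw [show 2 * (q + 1) = 2 * q + 1 + 1 by ring, walshDirichlet, Finset.sum_range_succ,
      Finset.sum_range_succ, ← walshDirichlet, ih, h0, h1, walshDirichlet, walshDirichlet,
      Finset.sum_range_succ]
    ring

lemma qIdx_succ (N : ℕ) : qIdx (N + 1) = 2 * (2 * qIdx N) + 1 := by
  rw [qIdx, qIdx, Finset.sum_range_succ', pow_zero]
  simp only [pow_succ, ← Finset.sum_mul]
  ring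

lemma walshDirichlet_qIdx_succ (N : ℕ) (x : ℝ) :
    walshDirichlet (qIdx (N + 1)) x =
      (1 + r0 x) * (1 + r0 (2 * x)) * walshDirichlet (qIdx N) (4 * x) +
        walsh (qIdx N) (4 * x) := by
  have hw := walsh_two_mul_add (2 * qIdx N) 0 (by norm_num) x
  have hw' := walsh_two_mul_add (qIdx N) 0 (by norm_num) (2 * x)
  simp only [add_zero, zero_ne_one, ↓reduceIte, one_mul] at hw hw'
  rw [qIdx_succ, walshDirichlet, Finset.sum_range_succ, ← walshDirichlet, walshDirichlet_two_mul,
    walshDirichlet_two_mul, hw, hw', ← mul_assoc, ← mul_assoc]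
  norm_num

lemma one_add_r0_mul_one_add_r0_two_mul_of_quarter_le {x : ℝ} (h₁ : 1 / 4 ≤ x) (h₂ : x < 1) :
    (1 + r0 x) * (1 + r0 (2 * x)) = 0 := by
  rcases lt_or_ge x (1 / 2) with hx | hx
  · rw [r0_of_half_le (x := 2 * x) (by linarith) (by linarith)]; ring
  · rw [r0_of_half_le hx h₂]; ring

lemma one_add_r0_mul_one_add_r0_two_mul_of_lt_quarter {x : ℝ} (h₁ : 0 ≤ x) (h₂ : x < 1 / 4) :
    (1 + r0 x) * (1 + r0 (2 * x)) = 4 := by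
  rw [r0_of_lt_half h₁ (by linarith), r0_of_lt_half (x := 2 * x) (by linarith) (by linarith)]
  norm_num

lemma abs_walshDirichlet_qIdx_ge {N m : ℕ} (hm : m < N) {x : ℝ} (hx₁ : 1 ≤ 4 ^ (m + 1) * x)
    (hx₂ : 4 ^ m * x < 1) : (2 * 4 ^ m + 1) / 3 ≤ |walshDirichlet (qIdx N) x| := by
  induction N generalizing m x with
  | zero => exact absurd hm m.not_lt_zero
  | succ N ih =>
    rw [walshDirichlet_qIdx_succ]
    cases m with
    | zero =>
      norm_num at hx₁ hx₂
      rw [one_add_r0_mul_one_add_r0_two_mul_of_quarter_le (by linarith) (by linarith), zero_mul,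
        zero_add, abs_walsh]
      norm_num
    | succ m =>
      have h4 : (4 : ℝ) ≤ 4 ^ (m + 1) := le_self_pow₀ (by norm_num) (by omega)
      have hx₀ : 0 ≤ x := (pos_of_mul_pos_right (a := (4 : ℝ) ^ (m + 2)) (by linarith) (by positivity)).le
      rw [one_add_r0_mul_one_add_r0_two_mul_of_lt_quarter hx₀
        (by linarith [mul_le_mul_of_nonneg_right h4 hx₀])]
      have hD := ih (m := m) (by omega) (x := 4 * x)
        (by rw [← mul_assoc, ← pow_succ]; exact hx₁) (by rw [← mul_assoc, ← pow_succ]; exact hx₂)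
      calc (2 * 4 ^ (m + 1) + 1) / 3 = 4 * ((2 * 4 ^ m + 1) / 3) - 1 := by ring
        _ ≤ |4 * walshDirichlet (qIdx N) (4 * x)| - |walsh (qIdx N) (4 * x)| := by
          rw [abs_mul, abs_walsh, abs_of_pos (by norm_num : (0 : ℝ) < 4)]; linarith
        _ ≤ _ := abs_sub_abs_le_abs_add _ _

def annulus (N k : ℕ) : Set ℝ := Ico ((4 : ℝ) ^ k / 4 ^ N) (4 ^ (k + 1) / 4 ^ N)

lemma annulus_subset_Ioc {N k : ℕ} (hk : k < N) : annulus N k ⊆ Ioc 0 1 := by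
  have h : (4 : ℝ) ^ (k + 1) ≤ 4 ^ N := pow_le_pow_right₀ (by norm_num) hk
  exact fun x hx => ⟨(by positivity : (0 : ℝ) < 4 ^ k / 4 ^ N).trans_le hx.1,
    hx.2.le.trans ((div_le_one (by positivity)).mpr h)⟩

lemma abs_walshDirichlet_qIdx_ge_of_mem_annulus {N m k : ℕ} (hN : N = m + k + 1) {x : ℝ}
    (hx : x ∈ annulus N k) : (2 * 4 ^ m + 1) / 3 ≤ |walshDirichlet (qIdx N) x| := by
  have h4N : (4 : ℝ) ^ N = 4 ^ (m + 1) * 4 ^ k := by rw [hN, ← pow_add]; ring_nf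
  refine abs_walshDirichlet_qIdx_ge (by omega) ?_ ?_
  · calc (1 : ℝ) = 4 ^ (m + 1) * (4 ^ k / 4 ^ N) := by rw [h4N]; field_simp
      _ ≤ 4 ^ (m + 1) * x := by gcongr; exact hx.1
  · calc (4 : ℝ) ^ m * x < 4 ^ m * (4 ^ (k + 1) / 4 ^ N) := by gcongr; exact hx.2
      _ = 1 := by rw [h4N]; field_simp; ring

/-- The middle half of the support of `tent N j`, where the tent is at least `1/2`. -/
def tentMiddle (N j : ℕ) : Set ℝ := Ioc ((4 * j + 1 : ℝ) / (4 * 4 ^ N)) ((4 * j + 3) / (4 * 4 ^ N))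

lemma tent_nonneg (N j : ℕ) (x : ℝ) : 0 ≤ tent N j x := le_max_left _ _

lemma tentSum_nonneg (N : ℕ) (x : ℝ) : 0 ≤ tentSum N x :=
  Finset.sum_nonneg fun j _ => tent_nonneg N j x

lemma continuous_tentSum (N : ℕ) : Continuous (tentSum N) :=
  continuous_finsetSum _ fun _ _ => continuous_const.max (by fun_prop)

lemma half_le_tentSum {N j : ℕ} (hj : j ∈ Finset.Icc 1 (2 ^ (2 * N) - 1)) {x : ℝ}
    (hx : x ∈ tentMiddle N j) : 1 / 2 ≤ tentSum N x := by
  have hP : (0 : ℝ) < 4 * 4 ^ N := by positivity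
  have h₁ := (div_lt_iff₀ hP).mp hx.1
  have h₂ := (le_div_iff₀ hP).mp hx.2
  have hcenter : |2 ^ (2 * N + 1) * x - (2 * j + 1)| ≤ 1 / 2 := by
    rw [pow_succ, pow_mul]
    exact abs_le.mpr ⟨by norm_num; linarith, by norm_num; linarith⟩
  calc (1 : ℝ) / 2 ≤ tent N j x := le_max_of_le_right (by linarith)
    _ ≤ tentSum N x := Finset.single_le_sum (fun i _ => tent_nonneg N i x) hj

lemma tentMiddle_subset_annulus {N k j : ℕ} (hj : j ∈ Finset.Icc (4 ^ k) (4 ^ (k + 1) - 1)) :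
    tentMiddle N j ⊆ annulus N k := by
  obtain ⟨hj₁, hj₂⟩ := Finset.mem_Icc.mp hj
  have hj₁' : (4 : ℝ) ^ k ≤ j := by exact_mod_cast hj₁
  have hj₂' : (j : ℝ) + 1 ≤ 4 ^ (k + 1) := by
    exact_mod_cast (by have := Nat.one_le_pow (k + 1) 4 (by norm_num); omega : j + 1 ≤ 4 ^ (k + 1))
  intro x ⟨hx₁, hx₂⟩
  constructor
  · calc (4 : ℝ) ^ k / 4 ^ N = 4 * 4 ^ k / (4 * 4 ^ N) := by field_simp
      _ ≤ (4 * j + 1) / (4 * 4 ^ N) := by gcongr; linarith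
      _ ≤ x := hx₁.le
  · calc x ≤ (4 * j + 3) / (4 * 4 ^ N) := hx₂
      _ < 4 * 4 ^ (k + 1) / (4 * 4 ^ N) := by gcongr; linarith
      _ = 4 ^ (k + 1) / 4 ^ N := by field_simp

lemma four_pow_div_three_le_of_mem_tentMiddle {N m k j : ℕ} (hN : N = m + k + 1)
    (hj : j ∈ Finset.Icc (4 ^ k) (4 ^ (k + 1) - 1)) {x : ℝ} (hx : x ∈ tentMiddle N j) :
    (4 : ℝ) ^ m / 3 ≤ tentSum N x * |walshDirichlet (qIdx N) x| := by
  have hj' : j ∈ Finset.Icc 1 (2 ^ (2 * N) - 1) := by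
    obtain ⟨hj₁, hj₂⟩ := Finset.mem_Icc.mp hj
    have h₁ := Nat.one_le_pow k 4 (by norm_num)
    have h₂ : 4 ^ (k + 1) ≤ 2 ^ (2 * N) := by
      rw [pow_mul]; exact Nat.pow_le_pow_right (by norm_num) (by omega)
    exact Finset.mem_Icc.mpr ⟨by omega, by omega⟩
  have hD := abs_walshDirichlet_qIdx_ge_of_mem_annulus hN (tentMiddle_subset_annulus hj hx)
  calc (4 : ℝ) ^ m / 3 ≤ 1 / 2 * ((2 * 4 ^ m + 1) / 3) := by linarith
    _ ≤ tentSum N x * |walshDirichlet (qIdx N) x| :=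
      mul_le_mul (half_le_tentSum hj' hx) hD (by positivity) (tentSum_nonneg N x)

lemma integrableOn_tentSum_mul_abs_walshDirichlet (N n : ℕ) :
    IntegrableOn (fun x => tentSum N x * |walshDirichlet n x|) (Ioc 0 1) :=
  ((continuous_tentSum N).integrableOn_Icc.mono_set Ioc_subset_Icc_self).mul_bdd
    (measurable_walshDirichlet n).abs.aestronglyMeasurable
    (ae_of_all _ fun x => by simpa using abs_walshDirichlet_le n x)

lemma mul_sub_le_setIntegral_Ioc {f : ℝ → ℝ} {a b c : ℝ} (hab : a ≤ b)
    (hf : IntegrableOn f (Ioc a b)) (hc : ∀ x ∈ Ioc a b, c ≤ f x) :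
    c * (b - a) ≤ ∫ x in Ioc a b, f x := by
  simpa [Real.volume_real_Ioc_of_le hab] using
    setIntegral_ge_of_const_le_real measurableSet_Ioc measure_Ioc_lt_top.ne hc hf

lemma sum_setIntegral_le_setIntegral {α ι : Type*} [MeasurableSpace α] {μ : Measure α}
    {f : α → ℝ} {s : Finset ι} {A : ι → Set α} {B : Set α} (hA : ∀ i ∈ s, MeasurableSet (A i))
    (hdisj : (s : Set ι).PairwiseDisjoint A) (hAB : ∀ i ∈ s, A i ⊆ B)
    (hf : IntegrableOn f B μ) (hf₀ : 0 ≤ᵐ[μ.restrict B] f) :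
    ∑ i ∈ s, ∫ x in A i, f x ∂μ ≤ ∫ x in B, f x ∂μ := by
  rw [← integral_biUnion_finset s hA hdisj fun i hi => hf.mono_set (hAB i hi)]
  exact setIntegral_mono_set hf hf₀ (iUnion₂_subset hAB).eventuallyLE

lemma one_eighth_le_setIntegral_annulus {N m k : ℕ} (hN : N = m + k + 1) :
    1 / 8 ≤ ∫ x in annulus N k, tentSum N x * |walshDirichlet (qIdx N) x| := by
  set J := Finset.Icc (4 ^ k) (4 ^ (k + 1) - 1)
  have hint := (integrableOn_tentSum_mul_abs_walshDirichlet N (qIdx N)).mono_set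
    (annulus_subset_Ioc (N := N) (k := k) (by omega))
  have hcard : (J.card : ℝ) = 3 * 4 ^ k := by
    have := Nat.one_le_pow k 4 (by norm_num)
    rw [Nat.card_Icc, show 4 ^ (k + 1) - 1 + 1 - 4 ^ k = 3 * 4 ^ k by rw [pow_succ]; omega]
    push_cast; ring
  have hdisj : (J : Set ℕ).PairwiseDisjoint (tentMiddle N) :=
    ((pairwise_disjoint_on _).2 fun i j hij => Ioc_disjoint_Ioc_of_le (by
      have : (i : ℝ) + 1 ≤ j := by exact_mod_cast hij
      gcongr ?_ / _; linarith)).set_pairwise _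
  have hlen (j : ℕ) :
      (4 * j + 3 : ℝ) / (4 * 4 ^ N) - (4 * j + 1) / (4 * 4 ^ N) = 1 / (2 * 4 ^ N) := by
    field_simp; ring
  calc (1 : ℝ) / 8 = ∑ j ∈ J, (4 : ℝ) ^ m / 3 * (1 / (2 * 4 ^ N)) := by
        rw [Finset.sum_const, nsmul_eq_mul, hcard, hN, pow_succ, pow_add]
        field_simp
        ring
    _ ≤ ∑ j ∈ J, ∫ x in tentMiddle N j, tentSum N x * |walshDirichlet (qIdx N) x| :=
        Finset.sum_le_sum fun j hj => hlen j ▸ mul_sub_le_setIntegral_Ioc (by gcongr; norm_num)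
          (hint.mono_set (tentMiddle_subset_annulus hj))
          fun x hx => four_pow_div_three_le_of_mem_tentMiddle hN hj hx
    _ ≤ _ := sum_setIntegral_le_setIntegral (fun _ _ => measurableSet_Ioc) hdisj
        (fun _ hj => tentMiddle_subset_annulus hj) hint
        (ae_of_all _ fun x => mul_nonneg (tentSum_nonneg N x) (abs_nonneg _))

/-- `∫_0^1 φ_N |D_{q_N}| ≥ c N` for an absolute constant `c > 0`. -/
theorem stmt13 :
    ∃ c : ℝ, 0 < c ∧ ∀ N : ℕ,
      c * (N : ℝ) ≤ ∫ x in (0 : ℝ)..1, tentSum N x * |walshDirichlet (qIdx N) x| := by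
  refine ⟨1 / 8, by norm_num, fun N => ?_⟩
  have hdisj : (Finset.range N : Set ℕ).PairwiseDisjoint (annulus N) :=
    (Monotone.pairwise_disjoint_on_Ico_succ fun a b hab => by gcongr; norm_num).set_pairwise _
  rw [intervalIntegral.integral_of_le zero_le_one]
  calc 1 / 8 * (N : ℝ) = ∑ k ∈ Finset.range N, (1 / 8 : ℝ) := by simp [mul_comm]
    _ ≤ ∑ k ∈ Finset.range N,
          ∫ x in annulus N k, tentSum N x * |walshDirichlet (qIdx N) x| :=
        Finset.sum_le_sum fun k hk =>
          one_eighth_le_setIntegral_annulus (m := N - k - 1) (by simp at hk; omega)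
    _ ≤ _ := sum_setIntegral_le_setIntegral (fun _ _ => measurableSet_Ico) hdisj
        (fun _ hk => annulus_subset_Ioc (Finset.mem_range.mp hk))
        (integrableOn_tentSum_mul_abs_walshDirichlet N (qIdx N))
        (ae_of_all _ fun x => mul_nonneg (tentSum_nonneg N x) (abs_nonneg _))
end

section
/- For any sequence Λ = {λ_n} with λ_n increasing and positive, the class Λ*BV is contained in Λ#BV: if f has bounded Λ*-variation then f has bounded Λ#-variation. -/
open MeasureTheory Filter Set ENNReal

/-!
Write `f(b, y) - f(a, y)` as the increment `f(b, 0) - f(a, 0)` on the bottom edge plus the mixed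
difference of `f` over the rectangle `[a, b] × [0, y]`. Nonoverlapping intervals `[aᵢ, bᵢ]` give
nonoverlapping rectangles `[aᵢ, bᵢ] × [0, yᵢ]` whatever the points `yᵢ`, so every `Λ#`-sum of `f`
is at most a `ΛV₁`-sum plus a `Λ*`-sum; the second variable is handled by transposing `f`.
-/

lemma ENNReal.ofReal_abs_add_div_le (x y c : ℝ) :
    ENNReal.ofReal (|x + y| / c) ≤ ENNReal.ofReal (|x| / c) + ENNReal.ofReal (|y| / c) := by
  rcases le_or_gt c 0 with hc | hc
  · rw [ENNReal.ofReal_of_nonpos (div_nonpos_of_nonneg_of_nonpos (abs_nonneg _) hc)]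
    exact bot_le
  · calc ENNReal.ofReal (|x + y| / c) ≤ ENNReal.ofReal (|x| / c + |y| / c) := by
          rw [← add_div]; gcongr; exact abs_add_le x y
      _ ≤ _ := ENNReal.ofReal_add_le

def RectPack.transpose {n : ℕ} (R : RectPack n) : RectPack n where
  a := R.c
  b := R.d
  c := R.a
  d := R.b
  ha := R.hc
  hab := R.hcd
  hb := R.hd
  hc := R.ha
  hcd := R.hab
  hd := R.hb
  disj i j hij := Set.disjoint_left.2 fun p hp hq =>
    Set.disjoint_left.1 (R.disj i j hij) (show (p.2, p.1) ∈ _ from ⟨hp.2, hp.1⟩)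
      (show (p.2, p.1) ∈ _ from ⟨hq.2, hq.1⟩)

lemma rectV_swap_le (Λ : ℕ → ℝ) (f : ℝ → ℝ → ℝ) :
    rectV Λ (fun x y => f y x) ≤ rectV Λ f := by
  refine iSup₂_le fun n R => le_iSup₂_of_le n R.transpose (le_of_eq ?_)
  refine Finset.sum_congr rfl fun i _ => ?_
  simp only [RectPack.transpose]
  ring_nf

/-- The rectangles `[aᵢ, bᵢ] × [0, yᵢ]`; for `yᵢ = 0` the height `1` is only a nondegenerate
stand-in, since that term is not needed. -/
noncomputable def SharpPack.lowerRects {n : ℕ} (P : SharpPack n) : RectPack n where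
  a := P.a
  b := P.b
  c _ := 0
  d i := if 0 < P.y i then P.y i else 1
  ha := P.ha
  hab := P.hab
  hb := P.hb
  hc _ := le_rfl
  hcd i := by split_ifs with h <;> simp [h]
  hd i := by split_ifs <;> simp [(P.hy i).2.le]
  disj i j hij := Set.disjoint_left.2 fun _ hp hq =>
    Set.disjoint_left.1 (P.disj i j hij) hp.1 hq.1

lemma sharpSum_le_lineV1_add_rectV (Λ : ℕ → ℝ) (f : ℝ → ℝ → ℝ) {n : ℕ} (P : SharpPack n) :
    sharpSum Λ 0 f P ≤ lineV1 Λ f + rectV Λ f := by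
  let R := P.lowerRects
  have hline : ∑ i : Fin n, ENNReal.ofReal (|f (P.b i) 0 - f (P.a i) 0| / Λ (i.1 + 1)) ≤
      lineV1 Λ f :=
    le_iSup₂_of_le n (⟨0, by norm_num⟩ : Ico (0 : ℝ) 1)
      (le_iSup_of_le P.toIntervalPack le_rfl)
  have hrect : ∑ i : Fin n, ENNReal.ofReal
      (|f (R.a i) (R.c i) - f (R.a i) (R.d i) - f (R.b i) (R.c i) + f (R.b i) (R.d i)| /
        Λ (i.1 + 1)) ≤ rectV Λ f :=
    le_iSup₂_of_le n R le_rfl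
  refine le_trans ?_ (add_le_add hline hrect)
  rw [← Finset.sum_add_distrib]
  refine Finset.sum_le_sum fun i _ => ?_
  rw [zero_add]
  rcases (P.hy i).1.eq_or_lt with hy | hy
  · rw [← hy]
    exact le_self_add
  · have hsplit : f (P.b i) (P.y i) - f (P.a i) (P.y i) = (f (P.b i) 0 - f (P.a i) 0) +
        (f (P.a i) 0 - f (P.a i) (P.y i) - f (P.b i) 0 + f (P.b i) (P.y i)) := by ring
    simp only [R, SharpPack.lowerRects, if_pos hy, hsplit]
    exact ENNReal.ofReal_abs_add_div_le _ _ _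

lemma sharpV1_le_lineV1_add_rectV (Λ : ℕ → ℝ) (f : ℝ → ℝ → ℝ) :
    sharpV1 Λ 0 f ≤ lineV1 Λ f + rectV Λ f :=
  iSup₂_le fun _ P => sharpSum_le_lineV1_add_rectV Λ f P

lemma sharpV2_le_lineV2_add_rectV (Λ : ℕ → ℝ) (f : ℝ → ℝ → ℝ) :
    sharpV2 Λ 0 f ≤ lineV2 Λ f + rectV Λ f :=
  (sharpV1_le_lineV1_add_rectV Λ _).trans (add_le_add le_rfl (rectV_swap_le Λ f))

theorem stmt15_general (Λ : ℕ → ℝ)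
    (f : ℝ → ℝ → ℝ)
    (hf : lineV1 Λ f + lineV2 Λ f + rectV Λ f ≠ ⊤) :
    SharpBV Λ f := by
  have hle : sharpV Λ 0 f ≤ (lineV1 Λ f + rectV Λ f) + (lineV2 Λ f + rectV Λ f) :=
    add_le_add (sharpV1_le_lineV1_add_rectV Λ f) (sharpV2_le_lineV2_add_rectV Λ f)
  refine ne_top_of_le_ne_top ?_ hle
  simp only [ne_eq, ENNReal.add_eq_top, not_or] at hf ⊢
  tauto

/-- `Λ* BV ⊂ Λ^# BV` for increasing positive `Λ`. -/
theorem stmt15 (Λ : ℕ → ℝ) (hpos : ∀ n, 0 < Λ n) (hmono : ∀ n, Λ n ≤ Λ (n + 1))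
    (f : ℝ → ℝ → ℝ)
    (hf : lineV1 Λ f + lineV2 Λ f + rectV Λ f ≠ ⊤) :
    SharpBV Λ f :=
  stmt15_general Λ f hf
end
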